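/- arXiv:1312.7050 — 4 statements merged into one kernel-verified Lean document; each statement's English description precedes it below -/
import Mathlib

section
/- Suppose for every positive stochastic vector μ = (μ₁,…,μₙ), the point (x*, y*) is a saddle point of ∑ᵢ μᵢ fᵢ on X × Y, where each fᵢ : ℝ^{m₁} × ℝ^{m₂} → ℝ. Then (x*, y*) is a saddle point of each fᵢ individually on X × Y. -/
open scoped BigOperators

/-- A saddle point of `φ` on `X × Y`. -/
def IsSaddlePoint {E₁ E₂ : Type*} (φ : E₁ → E₂ → ℝ) (X : Set E₁) (Y : Set E₂)
    (xs : E₁) (ys : E₂) : Prop :=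
  xs ∈ X ∧ ys ∈ Y ∧ ∀ x ∈ X, ∀ y ∈ Y, φ xs y ≤ φ xs ys ∧ φ xs ys ≤ φ x ys

/-!
Fix `i`. The positive stochastic vectors are dense in the standard simplex, which contains the
vertex `Pi.single i 1`. Each saddle inequality for `∑ μⱼ fⱼ` is a closed condition on `μ`, so it
passes to this vertex, where it is the corresponding inequality for `fᵢ`.
-/

open Finset

section PosStdSimplex

variable {ι : Type*} [Fintype ι]

def posStdSimplex (ι : Type*) [Fintype ι] : Set (ι → ℝ) :=
  {μ | (∀ j, 0 < μ j) ∧ ∑ j, μ j = 1}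

theorem uniform_mem_posStdSimplex [Nonempty ι] :
    (fun _ => (Fintype.card ι : ℝ)⁻¹) ∈ posStdSimplex ι := by
  refine ⟨fun _ => by positivity, ?_⟩
  rw [sum_const, card_univ, nsmul_eq_mul, mul_inv_cancel₀]
  exact_mod_cast Fintype.card_ne_zero

theorem openSegment_subset_posStdSimplex {u v : ι → ℝ} (hu : u ∈ posStdSimplex ι)
    (hv : v ∈ stdSimplex ℝ ι) : openSegment ℝ u v ⊆ posStdSimplex ι := by
  rintro _ ⟨a, b, ha, hb, hab, rfl⟩
  refine ⟨fun j => ?_, ?_⟩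
  · simp only [Pi.add_apply, Pi.smul_apply, smul_eq_mul]
    have := hu.1 j
    have := hv.1 j
    positivity
  · simp only [Pi.add_apply, Pi.smul_apply, smul_eq_mul, sum_add_distrib, ← mul_sum, hu.2,
      hv.2, hab, mul_one]

theorem stdSimplex_subset_closure_posStdSimplex [Nonempty ι] :
    stdSimplex ℝ ι ⊆ closure (posStdSimplex ι) := fun _ hv =>
  closure_mono (openSegment_subset_posStdSimplex uniform_mem_posStdSimplex hv)
    (segment_subset_closure_openSegment (right_mem_segment ℝ _ _))

theorem le_of_forall_posStdSimplex_weighted_sum_le {a b : ι → ℝ}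
    (h : ∀ μ ∈ posStdSimplex ι, ∑ j, μ j * a j ≤ ∑ j, μ j * b j) (i : ι) : a i ≤ b i := by
  classical
  have : Nonempty ι := ⟨i⟩
  have hclosed : IsClosed {μ : ι → ℝ | ∑ j, μ j * a j ≤ ∑ j, μ j * b j} :=
    isClosed_le (by fun_prop) (by fun_prop)
  have hvertex := (hclosed.closure_subset_iff.mpr h)
    (stdSimplex_subset_closure_posStdSimplex (single_mem_stdSimplex ℝ i))
  simpa [Pi.single_apply] using hvertex

end PosStdSimplex

theorem saddle_of_all_convex_combinations {m₁ m₂ n : ℕ}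
    (f : Fin n → EuclideanSpace ℝ (Fin m₁) → EuclideanSpace ℝ (Fin m₂) → ℝ)
    (X : Set (EuclideanSpace ℝ (Fin m₁))) (Y : Set (EuclideanSpace ℝ (Fin m₂)))
    (xs : EuclideanSpace ℝ (Fin m₁)) (ys : EuclideanSpace ℝ (Fin m₂))
    (h : ∀ μ : Fin n → ℝ, (∀ i, 0 < μ i) → ∑ i, μ i = 1 →
      IsSaddlePoint (fun x y => ∑ i, μ i * f i x y) X Y xs ys) :
    ∀ i, IsSaddlePoint (f i) X Y xs ys := by
  intro i
  have : Nonempty (Fin n) := ⟨i⟩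
  have h' : ∀ μ ∈ posStdSimplex (Fin n),
      IsSaddlePoint (fun x y => ∑ j, μ j * f j x y) X Y xs ys := fun μ hμ => h μ hμ.1 hμ.2
  obtain ⟨hxs, hys, -⟩ := h' _ uniform_mem_posStdSimplex
  refine ⟨hxs, hys, fun x hx y hy => ⟨?_, ?_⟩⟩
  · exact le_of_forall_posStdSimplex_weighted_sum_le
      (fun μ hμ => ((h' μ hμ).2.2 x hx y hy).1) i
  · exact le_of_forall_posStdSimplex_weighted_sum_le
      (fun μ hμ => ((h' μ hμ).2.2 x hx y hy).2) i
end

section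
/- Suppose nonnegative sequences {αₖ} and {xₖ} (with xₖ = max-distance of states to a fixed point) satisfy x_{k+1} ≤ xₖ + αₖ L for all k, with L > 0, and lim_{k→∞} αₖ ∑_{s=0}^{k−1} αₛ = 0. Then lim_{k→∞} αₖ xₖ = 0. -/
/-!
Since `αₖ ≥ 0`, the hypothesis on `αₖ ∑_{s<k} αₛ` forces `αₖ → 0`: if `∑ αₛ` converges its terms
vanish, and otherwise the partial sums eventually exceed `1`, so `αₖ ≤ αₖ ∑_{s<k} αₛ`.
Telescoping the recursion gives `xₖ ≤ x₀ + L ∑_{s<k} αₛ`, hence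
`0 ≤ αₖ xₖ ≤ αₖ x₀ + L αₖ ∑_{s<k} αₛ → 0`.
-/

open Filter Finset

theorem tendsto_zero_of_tendsto_mul_sum_range {α : ℕ → ℝ} (hα : ∀ k, 0 ≤ α k)
    (h : Tendsto (fun k => α k * ∑ s ∈ range k, α s) atTop (nhds 0)) :
    Tendsto α atTop (nhds 0) := by
  by_cases hsum : Summable α
  · exact hsum.tendsto_atTop_zero
  · have hS : ∀ᶠ k in atTop, 1 ≤ ∑ s ∈ range k, α s :=
      ((not_summable_iff_tendsto_nat_atTop_of_nonneg hα).mp hsum).eventually_ge_atTop 1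
    refine squeeze_zero' (Eventually.of_forall hα) ?_ h
    filter_upwards [hS] with k hk
    exact le_mul_of_one_le_right (hα k) hk

theorem le_add_sum_range_of_le_add {x d : ℕ → ℝ} (h : ∀ k, x (k + 1) ≤ x k + d k) (n : ℕ) :
    x n ≤ x 0 + ∑ k ∈ range n, d k := by
  have : ∑ k ∈ range n, (x (k + 1) - x k) ≤ ∑ k ∈ range n, d k :=
    sum_le_sum fun k _ => sub_le_iff_le_add'.mpr (h k)
  rw [sum_range_sub] at this
  linarith

theorem stepsize_times_state_tendsto_zero_general
    (α x : ℕ → ℝ) (hα : ∀ k, 0 ≤ α k) (hx : ∀ k, 0 ≤ x k)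
    (L : ℝ)
    (hrec : ∀ k, x (k + 1) ≤ x k + α k * L)
    (hcond : Tendsto (fun k => α k * ∑ s ∈ Finset.range k, α s) atTop (nhds 0)) :
    Tendsto (fun k => α k * x k) atTop (nhds 0) := by
  have hα0 : Tendsto α atTop (nhds 0) := tendsto_zero_of_tendsto_mul_sum_range hα hcond
  have hbound (k : ℕ) : α k * x k ≤ α k * x 0 + L * (α k * ∑ s ∈ range k, α s) := by
    calc α k * x k ≤ α k * (x 0 + ∑ s ∈ range k, α s * L) :=
          mul_le_mul_of_nonneg_left (le_add_sum_range_of_le_add hrec k) (hα k)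
      _ = α k * x 0 + L * (α k * ∑ s ∈ range k, α s) := by rw [← sum_mul]; ring
  have hlim : Tendsto (fun k => α k * x 0 + L * (α k * ∑ s ∈ range k, α s)) atTop (nhds 0) := by
    simpa using (hα0.mul_const (x 0)).add (hcond.const_mul L)
  exact squeeze_zero (fun k => mul_nonneg (hα k) (hx k)) hbound hlim

theorem stepsize_times_state_tendsto_zero
    (α x : ℕ → ℝ) (hα : ∀ k, 0 ≤ α k) (hx : ∀ k, 0 ≤ x k)
    (L : ℝ) (hL : 0 < L)
    (hrec : ∀ k, x (k + 1) ≤ x k + α k * L)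
    (hcond : Tendsto (fun k => α k * ∑ s ∈ Finset.range k, α s) atTop (nhds 0)) :
    Tendsto (fun k => α k * x k) atTop (nhds 0) :=
  stepsize_times_state_tendsto_zero_general α x hα hx L hrec hcond
end

section
/- Let hₖ ≥ 0 satisfy, for some integer T ≥ 1, 0 < η < 1, L > 0 and nonnegative nonincreasing sequence {λₖ} with ∑ₖ λₖ² < ∞: h_{tT+q} ≤ (1 − η^T) h_{(t−1)T+q} + 2L ∑_{r=(t−1)T+q}^{tT+q−1} λᵣ for all t ≥ 1 and 0 ≤ q ≤ T−1. Then ∑_{k=0}^∞ λₖ hₖ < ∞. -/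
/-!
Fix a residue `q` mod `T` and put `aₜ = λ_{tT+q} h_{tT+q}`. Since `λ` is nonincreasing, the
block sum in the recursion is at most `T λ_{tT+q}`, and multiplying the recursion by
`λ_{(t+1)T+q} ≤ λ_{tT+q}` gives `aₜ₊₁ ≤ (1 - η^T) aₜ + 2LT λ_{tT+q}²`. A nonnegative sequence
that contracts up to a summable perturbation is summable, and the squares of `λ` along an
arithmetic progression are summable; summing over the `T` residue classes gives the claim.
-/

open Finset

lemma summable_of_forall_summable_mul_add {R : Type*} [AddCommGroup R] [TopologicalSpace R]
    [IsTopologicalAddGroup R] {m : ℕ} [NeZero m] {f : ℕ → R}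
    (hf : ∀ k < m, Summable fun n => f (m * n + k)) : Summable f := by
  have hsum : Summable fun n => ∑ a : ZMod m, {n : ℕ | (n : ZMod m) = a}.indicator f n :=
    summable_sum fun a _ => by
      rw [← ZMod.natCast_zmod_val a, summable_indicator_mod_iff_summable]
      exact hf _ (ZMod.val_lt a)
  refine hsum.congr fun n => ?_
  rw [← Finset.sum_apply, ← Finset.sum_indicator_mod]

lemma summable_of_le_mul_add {a b : ℕ → ℝ} {ρ : ℝ} (hρ : ρ < 1) (ha : ∀ n, 0 ≤ a n)
    (hb : Summable b) (hab : ∀ n, a (n + 1) ≤ ρ * a n + b n) : Summable a := by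
  set r := max ρ 0
  set B := ∑' n, |b n|
  have hr : r < 1 := max_lt hρ one_pos
  refine summable_of_sum_range_le (c := (a 0 + B) / (1 - r)) ha fun n => ?_
  rw [le_div_iff₀ (sub_pos.mpr hr)]
  have hS : ∑ k ∈ range n, a k ≤ ∑ k ∈ range (n + 1), a k :=
    sum_le_sum_of_subset_of_nonneg (range_subset_range.mpr n.le_succ) fun k _ _ => ha k
  have hstep : ∀ k, a (k + 1) ≤ r * a k + |b k| := fun k =>
    (hab k).trans (add_le_add (mul_le_mul_of_nonneg_right (le_max_left ρ 0) (ha k))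
      (le_abs_self _))
  have hbB : ∑ k ∈ range n, |b k| ≤ B := hb.abs.sum_le_tsum _ fun k _ => abs_nonneg _
  calc (∑ k ∈ range n, a k) * (1 - r)
      = ∑ k ∈ range n, a k - r * ∑ k ∈ range n, a k := by ring
    _ ≤ ∑ k ∈ range (n + 1), a k - r * ∑ k ∈ range n, a k := by linarith
    _ = a 0 + ∑ k ∈ range n, (a (k + 1) - r * a k) := by
      rw [sum_range_succ', sum_sub_distrib, mul_sum]; ring
    _ ≤ a 0 + B := by
      have := sum_le_sum fun k (_ : k ∈ range n) => sub_le_iff_le_add'.mpr (hstep k)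
      linarith

lemma Antitone.sum_Ico_add_le {f : ℕ → ℝ} (hf : Antitone f) (a n : ℕ) :
    ∑ k ∈ Ico a (a + n), f k ≤ n * f a := by
  simpa [nsmul_eq_mul] using
    sum_le_card_nsmul (Ico a (a + n)) f (f a) fun k hk => hf (mem_Ico.mp hk).1

lemma mul_le_mul_add_mul_sq {x y l l' ρ c : ℝ} (hx : 0 ≤ x) (hl' : 0 ≤ l') (hll' : l' ≤ l)
    (hxy : x ≤ ρ * y + c * l) : l' * x ≤ ρ * (l * y) + c * l ^ 2 :=
  calc l' * x ≤ l' * (ρ * y + c * l) := mul_le_mul_of_nonneg_left hxy hl'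
    _ ≤ l * (ρ * y + c * l) := mul_le_mul_of_nonneg_right hll' (hx.trans hxy)
    _ = ρ * (l * y) + c * l ^ 2 := by ring

theorem summable_weighted_disagreement_general
    (h lam : ℕ → ℝ) (hh : ∀ k, 0 ≤ h k) (hlam : ∀ k, 0 ≤ lam k)
    (hmono : ∀ k, lam (k + 1) ≤ lam k) (hsq : Summable (fun k => lam k ^ 2))
    (T : ℕ) (hT : 1 ≤ T) (η : ℝ) (hη0 : 0 < η) (L : ℝ) (hL : 0 < L)
    (hrec : ∀ t : ℕ, 1 ≤ t → ∀ q : ℕ, q ≤ T - 1 →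
      h (t * T + q) ≤ (1 - η ^ T) * h ((t - 1) * T + q) +
        2 * L * ∑ r ∈ Finset.Ico ((t - 1) * T + q) (t * T + q), lam r) :
    Summable (fun k => lam k * h k) := by
  have hanti : Antitone lam := antitone_nat_of_succ_le hmono
  have : NeZero T := NeZero.of_pos hT
  refine summable_of_forall_summable_mul_add (m := T) fun q hq => ?_
  have hnext : ∀ t, T * (t + 1) + q = (T * t + q) + T := fun t => by ring
  refine summable_of_le_mul_add (b := fun t => 2 * L * T * lam (T * t + q) ^ 2)
    (sub_lt_self 1 (pow_pos hη0 T)) (fun t => mul_nonneg (hlam _) (hh _))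
    ((hsq.comp_injective fun _ _ e => by simpa [NeZero.ne T] using e).mul_left _) fun t => ?_
  have hblock := hrec (t + 1) (by omega) q (by omega)
  rw [Nat.add_sub_cancel, mul_comm (t + 1), mul_comm t, hnext] at hblock
  rw [hnext]
  refine mul_le_mul_add_mul_sq (hh _) (hlam _) (hanti (by omega)) (hblock.trans ?_)
  have hsum_le := mul_le_mul_of_nonneg_left (hanti.sum_Ico_add_le (T * t + q) T)
    (by positivity : (0 : ℝ) ≤ 2 * L)
  linarith

theorem summable_weighted_disagreement
    (h lam : ℕ → ℝ) (hh : ∀ k, 0 ≤ h k) (hlam : ∀ k, 0 ≤ lam k)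
    (hmono : ∀ k, lam (k + 1) ≤ lam k) (hsq : Summable (fun k => lam k ^ 2))
    (T : ℕ) (hT : 1 ≤ T) (η : ℝ) (hη0 : 0 < η) (hη1 : η < 1) (L : ℝ) (hL : 0 < L)
    (hrec : ∀ t : ℕ, 1 ≤ t → ∀ q : ℕ, q ≤ T - 1 →
      h (t * T + q) ≤ (1 - η ^ T) * h ((t - 1) * T + q) +
        2 * L * ∑ r ∈ Finset.Ico ((t - 1) * T + q) (t * T + q), lam r) :
    Summable (fun k => lam k * h k) :=
  summable_weighted_disagreement_general h lam hh hlam hmono hsq T hT η hη0 L hL hrec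
end

section
/- Let hₖ ≥ 0 satisfy h_{tT+q} ≤ (1 − η^T) h_{(t−1)T+q} + 2L ∑_{r=(t−1)T+q}^{tT+q−1} λᵣ for all t ≥ 1, 0 ≤ q ≤ T−1, where η ∈ (0,1), T ≥ 1, L > 0, and λₖ → 0. Then hₖ → 0. -/
/-!
Along each residue class `q` mod `T`, the sequence `x s = h (s * T + q)` obeys the one-step
contraction `x (s + 1) ≤ (1 - η ^ T) * x s + e s`, where `e s` is `2L` times a sum of `T`
consecutive values of `λ` and hence tends to `0`; such a contraction forces `x s → 0`.
Finitely many residue classes then give `h → 0`.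
-/

open Filter Topology

theorem tendsto_of_forall_tendsto_comp_mul_add {α : Type*} {f : ℕ → α} {l : Filter α} {T : ℕ}
    (hT : 0 < T) (hf : ∀ q < T, Tendsto (fun s => f (s * T + q)) atTop l) :
    Tendsto f atTop l := by
  intro U hU
  obtain ⟨N, hN⟩ := eventually_atTop.1 <|
    eventually_all.2 fun q : Fin T => (hf q q.2).eventually (eventually_mem_set.2 hU)
  refine mem_atTop_sets.2 ⟨N * T, fun k hk => ?_⟩
  have := hN (k / T) ((Nat.le_div_iff_mul_le hT).2 hk) ⟨k % T, Nat.mod_lt k hT⟩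
  rwa [Nat.div_add_mod'] at this

theorem tendsto_sum_Ico_add {M : Type*} [AddCommMonoid M] [TopologicalSpace M] [ContinuousAdd M]
    {u : ℕ → M} {x : M} (hu : Tendsto u atTop (𝓝 x)) {a : ℕ → ℕ} (ha : Tendsto a atTop atTop)
    (T : ℕ) : Tendsto (fun s => ∑ r ∈ Finset.Ico (a s) (a s + T), u r) atTop (𝓝 (T • x)) := by
  simp only [Finset.sum_Ico_eq_sum_range, add_tsub_cancel_left]
  simpa using tendsto_finsetSum (Finset.range T) fun i _ =>
    hu.comp ((tendsto_add_atTop_nat i).comp ha)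

theorem tendsto_zero_of_le_mul_add {g e : ℕ → ℝ} {ρ : ℝ} (hg : ∀ n, 0 ≤ g n) (hρ0 : 0 ≤ ρ)
    (hρ1 : ρ < 1) (hrec : ∀ n, g (n + 1) ≤ ρ * g n + e n) (he : Tendsto e atTop (𝓝 0)) :
    Tendsto g atTop (𝓝 0) := by
  refine tendsto_order.2 ⟨fun a ha => .of_forall fun n => ha.trans_le (hg n), fun ε hε => ?_⟩
  obtain ⟨N, hN⟩ := eventually_atTop.1 <|
    (tendsto_order.1 he).2 ((1 - ρ) * (ε / 2)) (by nlinarith)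
  -- Once `e < (1 - ρ) ε / 2`, the level `ε / 2` is invariant under `x ↦ ρ x + e`.
  have hbound : ∀ m, g (N + m) ≤ ρ ^ m * g N + ε / 2 := by
    intro m
    induction m with
    | zero => simp only [add_zero, pow_zero, one_mul]; linarith
    | succ m ih =>
      calc g (N + (m + 1)) ≤ ρ * g (N + m) + e (N + m) := hrec (N + m)
        _ ≤ ρ * (ρ ^ m * g N + ε / 2) + (1 - ρ) * (ε / 2) := by
          gcongr
          exact (hN _ (Nat.le_add_right N m)).le
        _ = ρ ^ (m + 1) * g N + ε / 2 := by ring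
  have hpow : ∀ᶠ m in atTop, ρ ^ m * g N < ε / 2 := by
    have := (tendsto_pow_atTop_nhds_zero_of_lt_one hρ0 hρ1).mul_const (g N)
    exact (tendsto_order.1 (by simpa using this)).2 _ (half_pos hε)
  filter_upwards [(tendsto_sub_atTop_nat N).eventually hpow, eventually_ge_atTop N]
    with n hn hNn
  have := hbound (n - N)
  rw [Nat.add_sub_cancel' hNn] at this
  linarith

theorem disagreement_tendsto_zero_general
    (h lam : ℕ → ℝ) (hh : ∀ k, 0 ≤ h k)
    (hlam0 : Tendsto lam atTop (nhds 0))
    (T : ℕ) (hT : 1 ≤ T) (η : ℝ) (hη0 : 0 < η) (hη1 : η < 1) (L : ℝ)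
    (hrec : ∀ t : ℕ, 1 ≤ t → ∀ q : ℕ, q ≤ T - 1 →
      h (t * T + q) ≤ (1 - η ^ T) * h ((t - 1) * T + q) +
        2 * L * ∑ r ∈ Finset.Ico ((t - 1) * T + q) (t * T + q), lam r) :
    Tendsto h atTop (nhds 0) := by
  have hρ0 : 0 ≤ 1 - η ^ T := sub_nonneg.2 (pow_le_one₀ hη0.le hη1.le)
  have hρ1 : 1 - η ^ T < 1 := sub_lt_self _ (pow_pos hη0 T)
  refine tendsto_of_forall_tendsto_comp_mul_add hT fun q hq => ?_
  have hstart : Tendsto (fun s => s * T + q) atTop atTop :=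
    (tendsto_add_atTop_nat q).comp (tendsto_id.atTop_mul_const' hT)
  refine tendsto_zero_of_le_mul_add (fun s => hh _) hρ0 hρ1
    (e := fun s => 2 * L * ∑ r ∈ Finset.Ico (s * T + q) (s * T + q + T), lam r) (fun s => ?_)
    (by simpa using (tendsto_sum_Ico_add hlam0 hstart T).const_mul (2 * L))
  simpa [add_mul, add_right_comm] using hrec (s + 1) s.succ_pos q (by omega)

theorem disagreement_tendsto_zero
    (h lam : ℕ → ℝ) (hh : ∀ k, 0 ≤ h k) (hlam : ∀ k, 0 ≤ lam k)
    (hlam0 : Tendsto lam atTop (nhds 0))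
    (T : ℕ) (hT : 1 ≤ T) (η : ℝ) (hη0 : 0 < η) (hη1 : η < 1) (L : ℝ) (hL : 0 < L)
    (hrec : ∀ t : ℕ, 1 ≤ t → ∀ q : ℕ, q ≤ T - 1 →
      h (t * T + q) ≤ (1 - η ^ T) * h ((t - 1) * T + q) +
        2 * L * ∑ r ∈ Finset.Ico ((t - 1) * T + q) (t * T + q), lam r) :
    Tendsto h atTop (nhds 0) :=
  disagreement_tendsto_zero_general h lam hh hlam0 T hT η hη0 hη1 L hrec
end
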